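/- Let S be a convex subset of a finite-dimensional real vector space V equipped with a symmetric bilinear form Q of signature (1,n) with n ≥ 2. Suppose (a) the set {α ∈ S : Q(α,α) > 0} has nonempty interior in V, (b) the set {α ∈ S : Q(α,α) = 0} has empty interior in the null cone {v : Q(v,v) = 0}, and (c) the null cone locally separates the regions {Q > 0} and {Q < 0} along any segment crossing it. Then S contains no element of negative square. -/

import Mathlib

/-!
Applied to the open set `interior S`, the hypothesis on the null part of `S` says that
`interior S` misses the null cone. If `β ∈ S` had negative square, the segment from `β` to an
interior point `c` of the positive part would cross the null cone at some parameter `t > 0`;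
but by convexity every point `β + t • (c - β)` with `t ∈ (0, 1]` lies in `interior S`.
-/

/-- The standard quadratic form of signature `(1,n)` on `ℝ^{1+n}`. -/
def Qsig (n : ℕ) (v w : Fin (n + 1) → ℝ) : ℝ :=
  v 0 * w 0 - ∑ i : Fin n, v i.succ * w i.succ

theorem stmt_10_general (n : ℕ) (S : Set (Fin (n + 1) → ℝ))
    (hconv : Convex ℝ S)
    (hpos : (interior {α | α ∈ S ∧ 0 < Qsig n α α}).Nonempty)
    (hnull : ∀ U : Set (Fin (n + 1) → ℝ), IsOpen U →
      U ∩ {v | Qsig n v v = 0} ⊆ {α | α ∈ S ∧ Qsig n α α = 0} →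
      U ∩ {v | Qsig n v v = 0} = ∅)
    (hsep : ∀ x y : Fin (n + 1) → ℝ, Qsig n x x < 0 → 0 < Qsig n y y →
      ∃ t : ℝ, t ∈ Set.Icc (0 : ℝ) 1 ∧
        Qsig n (x + t • (y - x)) (x + t • (y - x)) = 0) :
    ∀ β ∈ S, 0 ≤ Qsig n β β := by
  intro β hβ
  by_contra! hneg
  obtain ⟨c, hc⟩ := hpos
  have hc_int : c ∈ interior S := interior_mono (fun _ hα => hα.1) hc
  have hc_pos : 0 < Qsig n c c := (interior_subset hc).2
  have hint_null : interior S ∩ {v | Qsig n v v = 0} = ∅ :=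
    hnull _ isOpen_interior fun _ hv => ⟨interior_subset hv.1, hv.2⟩
  obtain ⟨t, ⟨ht0, ht1⟩, ht_null⟩ := hsep β c hneg hc_pos
  have ht_pos : 0 < t := ht0.lt_of_ne <| by
    rintro rfl
    simp only [zero_smul, add_zero] at ht_null
    linarith
  have hz : β + t • (c - β) ∈ interior S :=
    hconv.add_smul_sub_mem_interior hβ hc_int ⟨ht_pos, ht1⟩
  exact hint_null.subset ⟨hz, ht_null⟩

/-- Convexity argument from Lemma `possquare`: for `n ≥ 2`, if `S ⊆ ℝ^{1+n}` is convex,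
the positive-square part of `S` has nonempty interior, the null part of `S` has empty
interior in the null cone, and the null cone separates the positive and negative regions
along any segment crossing them, then `S` contains no element of negative square. -/
theorem stmt_10 (n : ℕ) (hn : 2 ≤ n) (S : Set (Fin (n + 1) → ℝ))
    (hconv : Convex ℝ S)
    (hpos : (interior {α | α ∈ S ∧ 0 < Qsig n α α}).Nonempty)
    (hnull : ∀ U : Set (Fin (n + 1) → ℝ), IsOpen U →
      U ∩ {v | Qsig n v v = 0} ⊆ {α | α ∈ S ∧ Qsig n α α = 0} →
      U ∩ {v | Qsig n v v = 0} = ∅)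
    (hsep : ∀ x y : Fin (n + 1) → ℝ, Qsig n x x < 0 → 0 < Qsig n y y →
      ∃ t : ℝ, t ∈ Set.Icc (0 : ℝ) 1 ∧
        Qsig n (x + t • (y - x)) (x + t • (y - x)) = 0) :
    ∀ β ∈ S, 0 ≤ Qsig n β β :=
  stmt_10_general n S hconv hpos hnull hsep
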